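/- Fix ε > 0, a point (u, v, w) ∈ ℝ × ℝⁿ × ℝ, and a nonzero z ∈ ℝⁿ. Define f(β) = dist((u,v,w), F^ε_β)² and d²(β) = f(β) + (√β − ‖z‖₂)² for β ≥ 0, and let β* be the unique minimizer of d² over [0, ∞). Then β_low ≤ β* ≤ ‖z‖₂², where β_low = (‖z‖₂ / (1 + √f(0) + ‖z‖₂²/2))². -/
import Mathlib


/-- The Euler-like admissible set
`F^ε_β = {(ρ, m, E) : ρ ≥ ε and E − ‖m‖₂²/(2ρ) ≥ ε + β/2}`. -/
def Feps (n : ℕ) (ε β : ℝ) : Set (ℝ × EuclideanSpace ℝ (Fin n) × ℝ) :=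
  {p | ε ≤ p.1 ∧ ε + β / 2 ≤ p.2.2 - ‖p.2.1‖ ^ 2 / (2 * p.1)}

/-- The Euclidean distance from the point `(u, v, w) ∈ ℝ × ℝⁿ × ℝ` to a set `S`,
i.e. the infimum over `p ∈ S` of the Euclidean distance from `(u, v, w)` to `p`. -/
noncomputable def distTo (n : ℕ) (u : ℝ) (v : EuclideanSpace ℝ (Fin n)) (w : ℝ)
    (S : Set (ℝ × EuclideanSpace ℝ (Fin n) × ℝ)) : ℝ :=
  sInf ((fun p => Real.sqrt ((p.1 - u) ^ 2 + ‖p.2.1 - v‖ ^ 2 + (p.2.2 - w) ^ 2)) '' S)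

lemma feps_nonempty (n : ℕ) (ε β : ℝ) : (Feps n ε β).Nonempty := by
  refine ⟨(ε, 0, ε + β / 2), ?_, ?_⟩ <;> simp [Feps]

lemma image_nonneg (n : ℕ) (u : ℝ) (v : EuclideanSpace ℝ (Fin n)) (w : ℝ)
    (S : Set (ℝ × EuclideanSpace ℝ (Fin n) × ℝ)) :
    ∀ x ∈ (fun p => Real.sqrt ((p.1 - u) ^ 2 + ‖p.2.1 - v‖ ^ 2 + (p.2.2 - w) ^ 2)) '' S, 0 ≤ x := by
  rintro x ⟨p, _, rfl⟩; exact Real.sqrt_nonneg _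

lemma distTo_nonneg (n : ℕ) (u : ℝ) (v : EuclideanSpace ℝ (Fin n)) (w : ℝ)
    (S : Set (ℝ × EuclideanSpace ℝ (Fin n) × ℝ)) : 0 ≤ distTo n u v w S :=
  Real.sInf_nonneg (image_nonneg n u v w S)

lemma distTo_mono (n : ℕ) (u : ℝ) (v : EuclideanSpace ℝ (Fin n)) (w : ℝ)
    (ε β β' : ℝ) (h : β ≤ β') :
    distTo n u v w (Feps n ε β) ≤ distTo n u v w (Feps n ε β') := by
  apply csInf_le_csInf
  · exact ⟨0, fun x hx => image_nonneg n u v w _ x hx⟩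
  · exact (feps_nonempty n ε β').image _
  · apply Set.image_mono
    intro p hp
    exact ⟨hp.1, le_trans (by linarith) hp.2⟩

lemma sqrt_add_shift (a b x c : ℝ) (ha : 0 ≤ a) (hb : 0 ≤ b) (hc : 0 ≤ c) :
    Real.sqrt (a + b + (x + c) ^ 2) ≤ Real.sqrt (a + b + x ^ 2) + c := by
  have hS : 0 ≤ a + b + x ^ 2 := by positivity
  have h1 : Real.sqrt (a + b + x ^ 2) ^ 2 = a + b + x ^ 2 := Real.sq_sqrt hS
  have h2 : |x| ≤ Real.sqrt (a + b + x ^ 2) := by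
    rw [← Real.sqrt_sq_eq_abs]
    exact Real.sqrt_le_sqrt (by nlinarith)
  have h3 : a + b + (x + c) ^ 2 ≤ (Real.sqrt (a + b + x ^ 2) + c) ^ 2 := by
    nlinarith [le_abs_self x, mul_le_mul_of_nonneg_left ((le_abs_self x).trans h2) hc]
  calc Real.sqrt (a + b + (x + c) ^ 2) ≤ Real.sqrt ((Real.sqrt (a + b + x ^ 2) + c) ^ 2) :=
        Real.sqrt_le_sqrt h3
    _ = _ := Real.sqrt_sq (by positivity)

lemma distTo_shift (n : ℕ) (u : ℝ) (v : EuclideanSpace ℝ (Fin n)) (w : ℝ)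
    (ε β δ : ℝ) (hδ : 0 ≤ δ) :
    distTo n u v w (Feps n ε (β + δ)) ≤ distTo n u v w (Feps n ε β) + δ / 2 := by
  have key : ∀ b ∈ (fun p => Real.sqrt ((p.1 - u) ^ 2 + ‖p.2.1 - v‖ ^ 2 + (p.2.2 - w) ^ 2)) ''
      (Feps n ε β), distTo n u v w (Feps n ε (β + δ)) - δ / 2 ≤ b := by
    rintro b ⟨p, hp, rfl⟩
    have hq : (p.1, p.2.1, p.2.2 + δ / 2) ∈ Feps n ε (β + δ) := by
      refine ⟨hp.1, ?_⟩
      have := hp.2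
      dsimp only
      linarith
    have h1 : distTo n u v w (Feps n ε (β + δ)) ≤
        Real.sqrt ((p.1 - u) ^ 2 + ‖p.2.1 - v‖ ^ 2 + (p.2.2 + δ / 2 - w) ^ 2) := by
      apply csInf_le ⟨0, fun x hx => image_nonneg n u v w _ x hx⟩
      exact ⟨(p.1, p.2.1, p.2.2 + δ / 2), hq, rfl⟩
    have h2 : Real.sqrt ((p.1 - u) ^ 2 + ‖p.2.1 - v‖ ^ 2 + (p.2.2 + δ / 2 - w) ^ 2) ≤
        Real.sqrt ((p.1 - u) ^ 2 + ‖p.2.1 - v‖ ^ 2 + (p.2.2 - w) ^ 2) + δ / 2 := by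
      have := sqrt_add_shift ((p.1 - u) ^ 2) (‖p.2.1 - v‖ ^ 2) (p.2.2 - w) (δ / 2)
        (by positivity) (by positivity) (by linarith)
      have heq : p.2.2 + δ / 2 - w = p.2.2 - w + δ / 2 := by ring
      rwa [heq]
    linarith
  have := le_csInf ((feps_nonempty n ε β).image _) key
  have h' : distTo n u v w (Feps n ε β) =
      sInf ((fun p => Real.sqrt ((p.1 - u) ^ 2 + ‖p.2.1 - v‖ ^ 2 + (p.2.2 - w) ^ 2)) ''
        (Feps n ε β)) := rfl
  linarith [h' ▸ this]

/-- If `β*` is the (unique) minimizer over `[0, ∞)` of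
`d²(β) = dist((u,v,w), F^ε_β)² + (√β − ‖z‖₂)²`, then `β_low ≤ β* ≤ ‖z‖₂²`, where
`β_low = (‖z‖₂ / (1 + √f(0) + ‖z‖₂²/2))²`. -/
theorem minimizer_bounds (n : ℕ) (hn : 0 < n) (ε : ℝ) (hε : 0 < ε)
    (u : ℝ) (v : EuclideanSpace ℝ (Fin n)) (w : ℝ)
    (z : EuclideanSpace ℝ (Fin n)) (hz : z ≠ 0)
    (βstar : ℝ) (hβstar : βstar ∈ Set.Ici (0 : ℝ))
    (hmin : ∀ β ∈ Set.Ici (0 : ℝ),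
      distTo n u v w (Feps n ε βstar) ^ 2 + (Real.sqrt βstar - ‖z‖) ^ 2 ≤
      distTo n u v w (Feps n ε β) ^ 2 + (Real.sqrt β - ‖z‖) ^ 2) :
    (‖z‖ / (1 + Real.sqrt (distTo n u v w (Feps n ε 0) ^ 2) + ‖z‖ ^ 2 / 2)) ^ 2 ≤ βstar
      ∧ βstar ≤ ‖z‖ ^ 2 := by
  have hβ0 : (0 : ℝ) ≤ βstar := hβstar
  have hL : 0 < ‖z‖ := norm_pos_iff.mpr hz
  set L : ℝ := ‖z‖ with hLdef
  set s : ℝ := Real.sqrt βstar with hsdef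
  have hs2 : s ^ 2 = βstar := Real.sq_sqrt hβ0
  have hsnn : 0 ≤ s := Real.sqrt_nonneg _
  have hDs : 0 ≤ distTo n u v w (Feps n ε βstar) := distTo_nonneg n u v w _
  have hD0 : 0 ≤ distTo n u v w (Feps n ε 0) := distTo_nonneg n u v w _
  -- upper bound
  have hub : βstar ≤ L ^ 2 := by
    by_contra hcon
    push_neg at hcon
    have h := hmin (L ^ 2) (by simp only [Set.mem_Ici]; positivity)
    rw [Real.sqrt_sq hL.le] at h
    have hmono : distTo n u v w (Feps n ε (L ^ 2)) ≤ distTo n u v w (Feps n ε βstar) :=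
      distTo_mono n u v w ε _ _ hcon.le
    have hDL : 0 ≤ distTo n u v w (Feps n ε (L ^ 2)) := distTo_nonneg n u v w _
    have hsL : L < s := by
      have := Real.sqrt_lt_sqrt (by positivity) hcon
      rwa [Real.sqrt_sq hL.le] at this
    nlinarith [mul_pos (sub_pos.mpr hsL) (sub_pos.mpr hsL)]
  -- key inequality for δ > 0
  have key : ∀ δ : ℝ, 0 < δ →
      2 * L ≤ (s + Real.sqrt (βstar + δ)) * (1 + distTo n u v w (Feps n ε βstar) + δ / 4) := by
    intro δ hδ
    have h := hmin (βstar + δ) (by simp only [Set.mem_Ici]; linarith)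
    set t : ℝ := Real.sqrt (βstar + δ) with htdef
    have ht2 : t ^ 2 = βstar + δ := Real.sq_sqrt (by linarith)
    have hst : s < t := Real.sqrt_lt_sqrt hβ0 (by linarith)
    have hshift : distTo n u v w (Feps n ε (βstar + δ)) ≤
        distTo n u v w (Feps n ε βstar) + δ / 2 := distTo_shift n u v w ε βstar δ hδ.le
    have hDd : 0 ≤ distTo n u v w (Feps n ε (βstar + δ)) := distTo_nonneg n u v w _
    have hsq : distTo n u v w (Feps n ε (βstar + δ)) ^ 2 ≤
        (distTo n u v w (Feps n ε βstar) + δ / 2) ^ 2 := by nlinarith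
    have h3 : 2 * L * (t - s) ≤ δ * (1 + distTo n u v w (Feps n ε βstar) + δ / 4) := by
      nlinarith [h, hsq, hs2, ht2]
    have hδeq : δ = t ^ 2 - s ^ 2 := by linarith
    have h4 : 2 * L * (t - s) ≤
        ((s + t) * (1 + distTo n u v w (Feps n ε βstar) + δ / 4)) * (t - s) := by
      calc 2 * L * (t - s) ≤ δ * (1 + distTo n u v w (Feps n ε βstar) + δ / 4) := h3
        _ = ((s + t) * (1 + distTo n u v w (Feps n ε βstar) + δ / 4)) * (t - s) := by
            rw [hδeq]; ring
    exact le_of_mul_le_mul_right h4 (sub_pos.mpr hst)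
  -- limit δ → 0⁺
  have hcont : ContinuousAt (fun δ : ℝ =>
      (s + Real.sqrt (βstar + δ)) * (1 + distTo n u v w (Feps n ε βstar) + δ / 4)) 0 := by
    fun_prop
  have h0 : (s + Real.sqrt (βstar + 0)) * (1 + distTo n u v w (Feps n ε βstar) + 0 / 4)
      = 2 * s * (1 + distTo n u v w (Feps n ε βstar)) := by
    rw [add_zero, ← hsdef]; ring
  have hlim : Filter.Tendsto (fun δ : ℝ =>
      (s + Real.sqrt (βstar + δ)) * (1 + distTo n u v w (Feps n ε βstar) + δ / 4))
      (nhdsWithin 0 (Set.Ioi 0)) (nhds (2 * s * (1 + distTo n u v w (Feps n ε βstar)))) := by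
    have := hcont.tendsto.mono_left (nhdsWithin_le_nhds (s := Set.Ioi (0:ℝ)))
    rwa [h0] at this
  have hmain : 2 * L ≤ 2 * s * (1 + distTo n u v w (Feps n ε βstar)) := by
    refine ge_of_tendsto hlim ?_
    filter_upwards [self_mem_nhdsWithin] with δ hδ
    exact key δ hδ
  have hspos : 0 < s := by nlinarith
  have hDb : distTo n u v w (Feps n ε βstar) ≤ distTo n u v w (Feps n ε 0) + βstar / 2 := by
    have := distTo_shift n u v w ε 0 βstar hβ0
    rwa [zero_add] at this
  have hfin : L ≤ s * (1 + distTo n u v w (Feps n ε 0) + L ^ 2 / 2) := by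
    nlinarith [mul_le_mul_of_nonneg_left hDb hsnn, mul_le_mul_of_nonneg_left hub hsnn]
  constructor
  · rw [Real.sqrt_sq hD0]
    have hcpos : 0 < 1 + distTo n u v w (Feps n ε 0) + L ^ 2 / 2 := by nlinarith
    have hdiv : L / (1 + distTo n u v w (Feps n ε 0) + L ^ 2 / 2) ≤ s :=
      (div_le_iff₀ hcpos).mpr (by linarith)
    calc (L / (1 + distTo n u v w (Feps n ε 0) + L ^ 2 / 2)) ^ 2 ≤ s ^ 2 :=
          pow_le_pow_left₀ (by positivity) hdiv 2
      _ = βstar := hs2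
  · exact hub
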